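/- arXiv:1709.08940 — 7 statements merged into one kernel-verified Lean document; each statement's English description precedes it below -/
import Mathlib

section
/- For every α ∈ (0, 1/2], the function u_α(z) = z + α(1-|z|²)z is injective on the open unit disk. -/
theorem stmt_1 (α : ℝ) (hα0 : 0 < α) (hα : α ≤ 1/2) :
    Set.InjOn (fun z : ℂ => z + (α : ℂ) * ((1 - ‖z‖^2 : ℝ) : ℂ) * z)
      {z : ℂ | ‖z‖ < 1} := by
  intro z hz w hw h
  simp only [Set.mem_setOf_eq] at hz hw
  simp only at h
  set r := ‖z‖ with hr
  set s := ‖w‖ with hs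
  have hr0 : 0 ≤ r := norm_nonneg z
  have hs0 : 0 ≤ s := norm_nonneg w
  have hc : (0:ℝ) < 1 + α * (1 - r^2) := by nlinarith
  have hd : (0:ℝ) < 1 + α * (1 - s^2) := by nlinarith
  have heq : z * ((1 + α * (1 - r^2) : ℝ) : ℂ) = w * ((1 + α * (1 - s^2) : ℝ) : ℂ) := by
    push_cast at h ⊢
    linear_combination h
  have hnorm : r * (1 + α * (1 - r^2)) = s * (1 + α * (1 - s^2)) := by
    have := congrArg norm heq
    simp only [norm_mul, Complex.norm_real, Real.norm_eq_abs,
      abs_of_pos hc, abs_of_pos hd] at this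
    exact this
  have h3 : r^2 + r*s + s^2 < 3 := by
    nlinarith [mul_pos (by linarith : (0:ℝ) < 1 - r) (by linarith : (0:ℝ) < 1 - s)]
  have hF : (0:ℝ) < 1 + α - α * (r^2 + r*s + s^2) := by
    nlinarith [mul_pos hα0 (by linarith : (0:ℝ) < 3 - (r^2 + r*s + s^2))]
  have hzero : (r - s) * (1 + α - α * (r^2 + r*s + s^2)) = 0 := by
    linear_combination hnorm
  have hrs : r = s := by
    rcases mul_eq_zero.mp hzero with h' | h'
    · linarith
    · linarith
  have hcast : ((1 + α * (1 - r^2) : ℝ) : ℂ) = ((1 + α * (1 - s^2) : ℝ) : ℂ) := by rw [hrs]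
  rw [hcast] at heq
  exact mul_right_cancel₀ (by exact_mod_cast hd.ne') heq
end

section
/- For every natural number n ≥ 2 and every real r with 0 < r < 1, one has 3 - r² > (n + 2 - n·r²)·r^{n-1}. -/
lemma aux_pow (r : ℝ) (hr0 : 0 ≤ r) (hr1 : r ≤ 1) :
    ∀ m : ℕ, ((m:ℝ) + 1) * r^m * (1 - r) ≤ 1 - r^(m+1) := by
  intro m
  induction m with
  | zero => simp
  | succ k ih =>
    have hpow : r^(k+1) ≤ r^k := pow_le_pow_of_le_one hr0 hr1 (Nat.le_succ k)
    have h1 : 0 ≤ 1 - r := by linarith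
    push_cast
    have : r^(k+1+1) = r^(k+1) * r := by ring
    nlinarith [mul_nonneg (mul_nonneg (by positivity : (0:ℝ) ≤ (k:ℝ)+1) (sub_nonneg.2 hpow)) h1, pow_nonneg hr0 (k+1)]

theorem stmt_3 (n : ℕ) (hn : 2 ≤ n) (r : ℝ) (hr0 : 0 < r) (hr1 : r < 1) :
    3 - r^2 > ((n : ℝ) + 2 - n * r^2) * r^(n-1) := by
  obtain ⟨m, rfl⟩ : ∃ m, n = m + 1 := ⟨n - 1, by omega⟩
  have hm : 1 ≤ m := by omega
  simp only [Nat.add_sub_cancel]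
  have key := aux_pow r hr0.le hr1.le m
  have hx : 0 < r^m := pow_pos hr0 m
  have hx2 : r^m ≤ r^1 := pow_le_pow_of_le_one hr0.le hr1.le hm
  rw [pow_one] at hx2
  rcases eq_or_lt_of_le hm with h1 | h2
  · -- n = 2, m = 1
    subst h1
    push_cast
    nlinarith [sq_nonneg (r - 1), mul_pos hr0 hr0]
  · -- m ≥ 2
    have hx3 : r^m ≤ r^2 := pow_le_pow_of_le_one hr0.le hr1.le h2
    have hrn : r^(m+1) = r^m * r := by ring
    rw [hrn] at key
    push_cast
    nlinarith [sq_nonneg (r - 1), mul_pos hx hr0, sq_nonneg r,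
      mul_nonneg (mul_nonneg hx.le hr0.le) hr0.le]
end

section
/- For every natural number n ≥ 2, the harmonic mapping H(z) = z + (1/n)·conj(z)ⁿ is injective on the open unit disk. -/
theorem stmt_5 (n : ℕ) (hn : 2 ≤ n) :
    Set.InjOn (fun z : ℂ => z + (starRingEnd ℂ z)^n / (n : ℂ))
      {z : ℂ | ‖z‖ < 1} := by
  intro z hz w hw h
  by_contra hne
  simp only [Set.mem_setOf_eq] at hz hw h
  have hn0 : (n : ℂ) ≠ 0 := Nat.cast_ne_zero.mpr (by omega)
  have hnR : (0:ℝ) < n := by exact_mod_cast (by omega : 0 < n)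
  set a := starRingEnd ℂ w with ha
  set b := starRingEnd ℂ z with hb
  have heq : z - w = (a ^ n - b ^ n) / n := by
    field_simp at h ⊢
    linear_combination h
  have hab : ‖a‖ < 1 := by simpa [ha] using hw
  have hbb : ‖b‖ < 1 := by simpa [hb] using hz
  have hfac : (∑ i ∈ Finset.range n, a ^ i * b ^ (n - 1 - i)) * (a - b) = a ^ n - b ^ n :=
    geom_sum₂_mul a b n
  have habne : a - b ≠ 0 := by
    simp only [ha, hb, sub_ne_zero]
    exact fun hc => hne (by have := congrArg (starRingEnd ℂ) hc; simpa using this.symm)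
  have hterm : ∀ i ∈ Finset.range n, ‖a ^ i * b ^ (n - 1 - i)‖ < 1 := by
    intro i hi
    rw [norm_mul, norm_pow, norm_pow]
    rcases Nat.eq_zero_or_pos i with hi0 | hip
    · subst hi0
      simpa using pow_lt_one₀ (norm_nonneg b) hbb (by omega)
    · calc ‖a‖ ^ i * ‖b‖ ^ (n - 1 - i) ≤ ‖a‖ ^ i * 1 := by
            exact mul_le_mul_of_nonneg_left (pow_le_one₀ (norm_nonneg b) hbb.le)
              (by positivity)
        _ = ‖a‖ ^ i := mul_one _
        _ < 1 := pow_lt_one₀ (norm_nonneg a) hab (by omega)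
  have hsum : ‖∑ i ∈ Finset.range n, a ^ i * b ^ (n - 1 - i)‖ < n := by
    calc ‖∑ i ∈ Finset.range n, a ^ i * b ^ (n - 1 - i)‖
        ≤ ∑ i ∈ Finset.range n, ‖a ^ i * b ^ (n - 1 - i)‖ := norm_sum_le _ _
      _ < ∑ _i ∈ Finset.range n, (1:ℝ) := by
          apply Finset.sum_lt_sum_of_nonempty
          · exact Finset.nonempty_range_iff.mpr (by omega)
          · exact hterm
      _ = n := by simp
  have hnorm : ‖a ^ n - b ^ n‖ < n * ‖a - b‖ := by
    rw [← hfac, norm_mul]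
    exact mul_lt_mul_of_pos_right hsum (norm_pos_iff.mpr habne)
  have habzw : ‖a - b‖ = ‖z - w‖ := by
    rw [ha, hb, ← map_sub, RCLike.norm_conj, norm_sub_rev]
  have hzwpos : 0 < ‖z - w‖ := by rw [← habzw]; exact norm_pos_iff.mpr habne
  have : ‖z - w‖ < ‖z - w‖ := by
    calc ‖z - w‖ = ‖a ^ n - b ^ n‖ / n := by
          rw [heq, norm_div]; simp
      _ < n * ‖a - b‖ / n := by
          exact div_lt_div_of_pos_right hnorm hnR
      _ = ‖z - w‖ := by rw [habzw]; field_simp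
  exact lt_irrefl _ this
end

section
/- Let h be analytic on the unit disk 𝔻 with h(0) = 0, h'(0) = 1, and suppose h is convex (i.e., Re(1 + z h''(z)/h'(z)) > 0 and h'(z) ≠ 0 on 𝔻). Define u(z) = h(z) + (1-|z|²)·(1/2)·z·h'(z). Then the Jacobian J_u(z) = |∂u/∂z|² - |∂u/∂z̄|² is positive for all z ∈ 𝔻; equivalently, since ∂u/∂z = (h'(z)/2)[2 - |z|² + (1-|z|²)(1 + z h''(z)/h'(z))] and ∂u/∂z̄ = -(1/2)z²h'(z), one has |2 - |z|² + (1-|z|²)(1 + z h''(z)/h'(z))|² > |z|⁴ on 𝔻. -/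
theorem stmt_6 (h : ℂ → ℂ)
    (hd : DifferentiableOn ℂ h (Metric.ball 0 1))
    (h0 : h 0 = 0) (h1 : deriv h 0 = 1)
    (hne : ∀ z ∈ Metric.ball (0 : ℂ) 1, deriv h z ≠ 0)
    (hconv : ∀ z ∈ Metric.ball (0 : ℂ) 1,
      0 < (1 + z * deriv (deriv h) z / deriv h z).re) :
    ∀ z ∈ Metric.ball (0 : ℂ) 1,
      ‖((2 - ‖z‖^2 : ℝ) : ℂ) + ((1 - ‖z‖^2 : ℝ) : ℂ) *
          (1 + z * deriv (deriv h) z / deriv h z)‖^2 > ‖z‖^4 := by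
  intro z hz
  have hz1 : ‖z‖ < 1 := by simpa using hz
  set w := 1 + z * deriv (deriv h) z / deriv h z with hwdef
  have hw : 0 < w.re := hconv z hz
  set r : ℝ := ‖z‖ with hrdef
  have hr : 0 ≤ r := norm_nonneg z
  have key : r ^ 2 < ‖((2 - r ^ 2 : ℝ) : ℂ) + ((1 - r ^ 2 : ℝ) : ℂ) * w‖ := by
    calc r ^ 2 < (2 - r ^ 2) + (1 - r ^ 2) * w.re := by nlinarith [mul_pos (show (0:ℝ) < 1 - r ^ 2 by nlinarith) hw]
    _ = (((2 - r ^ 2 : ℝ) : ℂ) + ((1 - r ^ 2 : ℝ) : ℂ) * w).re := by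
        simp [Complex.add_re, Complex.mul_re, ← Complex.ofReal_pow]
    _ ≤ ‖((2 - r ^ 2 : ℝ) : ℂ) + ((1 - r ^ 2 : ℝ) : ℂ) * w‖ :=
        Complex.re_le_norm _
  have hn : 0 ≤ ‖((2 - r ^ 2 : ℝ) : ℂ) + ((1 - r ^ 2 : ℝ) : ℂ) * w‖ := norm_nonneg _
  nlinarith [sq_nonneg r]
end

section
/- Let h be analytic and univalent on 𝔻 with h(0) = 0, h'(0) = 1 (so Re(1 + z h''(z)/h'(z)) > (1 - 4|z| + |z|²)/(1 - |z|²) by standard distortion theory). Then the function u(z) = h(z) + (1-|z|²)(1/2)z h'(z) has positive Jacobian (is sense-preserving) on the disk |z| < √7 - 2. -/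
/-!
On `|z| = r` the Jacobian equals `|h'(z)|² / 4 · (|A|² - r⁴)` with
`A = 2 - r² + (1 - r²)(1 + z h''/h')`. The distortion bound gives `Re A ≥ 3 - 4r`, which exceeds
`r²` exactly when `r < √7 - 2`. It remains to see that `h'` has no zeros: at a zero `z₀ ≠ 0` of
`h'`, `Re (z h''/h')` tends to `-∞` along the radius towards `z₀`, while the distortion bound
keeps it bounded below near `z₀`.
-/

open Filter Topology Metric

theorem AnalyticAt.exists_logDeriv_eventuallyEq_of_zero {𝕜 : Type*} [NontriviallyNormedField 𝕜]
    [CompleteSpace 𝕜] {f : 𝕜 → 𝕜} {z₀ : 𝕜} (hf : AnalyticAt 𝕜 f z₀) (hfz₀ : f z₀ = 0)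
    (hf₀ : ¬∀ᶠ z in 𝓝 z₀, f z = 0) :
    ∃ n : ℕ, 0 < n ∧ ∃ g : 𝕜 → 𝕜, AnalyticAt 𝕜 g z₀ ∧ g z₀ ≠ 0 ∧
      ∀ᶠ z in 𝓝[≠] z₀, logDeriv f z = n / (z - z₀) + logDeriv g z := by
  obtain ⟨n, g, hg, hgz₀, hfg⟩ := hf.exists_eventuallyEq_pow_smul_nonzero_iff.mpr hf₀
  refine ⟨n, Nat.pos_of_ne_zero ?_, g, hg, hgz₀, ?_⟩
  · rintro rfl
    exact hgz₀ (by simpa [hfz₀] using hfg.self_of_nhds.symm)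
  have hg_ne : ∀ᶠ z in 𝓝 z₀, g z ≠ 0 := hg.continuousAt.eventually_ne hgz₀
  have hg_diff : ∀ᶠ z in 𝓝 z₀, DifferentiableAt 𝕜 g z :=
    hg.eventually_analyticAt.mono fun _ hz ↦ hz.differentiableAt
  filter_upwards [self_mem_nhdsWithin, nhdsWithin_le_nhds hfg.eventually_nhds,
    nhdsWithin_le_nhds hg_ne, nhdsWithin_le_nhds hg_diff] with z hz hfz hgz hdgz
  have hz' : z - z₀ ≠ 0 := sub_ne_zero.mpr hz
  simp only [smul_eq_mul] at hfz
  rw [(logDeriv_congr_nhds hfz).eq_of_nhds,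
    logDeriv_mul z (pow_ne_zero n hz' : (z - z₀) ^ n ≠ 0) hgz (by fun_prop) hdgz,
    logDeriv_fun_pow (by fun_prop)]
  simp [logDeriv_apply, div_eq_mul_inv]

theorem AnalyticAt.not_eventually_le_re_mul_logDeriv {f : ℂ → ℂ} {z₀ : ℂ}
    (hf : AnalyticAt ℂ f z₀) (hz₀ : z₀ ≠ 0) (hfz₀ : f z₀ = 0) (hf₀ : ¬∀ᶠ z in 𝓝 z₀, f z = 0)
    (c : ℝ) : ¬∀ᶠ z in 𝓝[≠] z₀, c ≤ (z * logDeriv f z).re := by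
  obtain ⟨n, hn, g, hg, hgz₀, hfg⟩ := hf.exists_logDeriv_eventuallyEq_of_zero hfz₀ hf₀
  set γ : ℝ → ℂ := fun t ↦ (1 - t) * z₀
  have hγ : Tendsto γ (𝓝[>] 0) (𝓝[≠] z₀) := by
    refine tendsto_nhdsWithin_iff.mpr ⟨?_, ?_⟩
    · have : Continuous γ := by fun_prop
      simpa [γ] using this.continuousWithinAt.tendsto (x := 0) (s := Set.Ioi 0)
    · filter_upwards [self_mem_nhdsWithin] with t (ht : 0 < t)
      simp [γ, sub_mul, hz₀, ht.ne']
  -- along the ray `(1 - t) z₀` the pole term `z n / (z - z₀)` is the real number `n - n / t`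
  have hpole : (fun t ↦ (γ t * logDeriv f (γ t)).re) =ᶠ[𝓝[>] 0]
      fun t ↦ ((n : ℝ) - n / t) + (γ t * logDeriv g (γ t)).re := by
    filter_upwards [hγ.eventually hfg, self_mem_nhdsWithin] with t ht (ht₀ : 0 < t)
    have ht₀' : (t : ℂ) ≠ 0 := by exact_mod_cast ht₀.ne'
    have hray : γ t * (n / (γ t - z₀)) = (((n : ℝ) - n / t : ℝ) : ℂ) := by
      have hγz₀ : γ t - z₀ = -t * z₀ := by ring
      rw [hγz₀]
      push_cast
      field_simp
      ring
    rw [ht, mul_add, hray, Complex.add_re, Complex.ofReal_re]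
  have hpole_tendsto : Tendsto (fun t : ℝ ↦ (n : ℝ) - n / t) (𝓝[>] 0) atBot :=
    tendsto_atBot_add_const_left _ _ <| tendsto_neg_atTop_atBot.comp <|
      (tendsto_inv_nhdsGT_zero.const_mul_atTop (Nat.cast_pos.mpr hn)).congr
        fun t ↦ (div_eq_mul_inv _ _).symm
  have hreg : ContinuousAt (fun z ↦ (z * logDeriv g z).re) z₀ := by
    have : ContinuousAt (logDeriv g) z₀ := hg.deriv.continuousAt.div hg.continuousAt hgz₀
    fun_prop
  have hbot : Tendsto (fun t ↦ (γ t * logDeriv f (γ t)).re) (𝓝[>] 0) atBot :=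
    (hpole_tendsto.atBot_add ((hreg.tendsto.comp (tendsto_nhdsWithin_iff.mp hγ).1))).congr'
      hpole.symm
  intro hle
  obtain ⟨t, hct, htc⟩ := ((hγ.eventually hle).and (hbot.eventually_le_atBot (c - 1))).exists
  linarith

theorem deriv_ne_zero_of_koebe_bound {h : ℂ → ℂ} (hd : DifferentiableOn ℂ h (ball 0 1))
    (h1 : deriv h 0 = 1)
    (hkoebe : ∀ z ∈ ball (0 : ℂ) 1,
      (1 - 4*‖z‖ + ‖z‖^2) / (1 - ‖z‖^2) ≤ (1 + z * deriv (deriv h) z / deriv h z).re)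
    {z₀ : ℂ} (hz₀ : z₀ ∈ ball (0 : ℂ) 1) : deriv h z₀ ≠ 0 := by
  intro hzero
  have hz₀_ne : z₀ ≠ 0 := by
    rintro rfl
    exact one_ne_zero (h1 ▸ hzero)
  have han : AnalyticOnNhd ℂ (deriv h) (ball 0 1) := (hd.analyticOnNhd isOpen_ball).deriv
  have hnot : ¬∀ᶠ z in 𝓝 z₀, deriv h z = 0 := fun hev ↦ one_ne_zero <| h1 ▸
    han.eqOn_zero_of_preconnected_of_eventuallyEq_zero (convex_ball 0 1).isPreconnected hz₀ hev
      (mem_ball_self one_pos)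
  set B : ℂ → ℝ := fun z ↦ (1 - 4*‖z‖ + ‖z‖^2) / (1 - ‖z‖^2)
  have hB : ContinuousAt B z₀ := by
    have hz₀_lt : ‖z₀‖ < 1 := mem_ball_zero_iff.mp hz₀
    have hden : 1 - ‖z₀‖ ^ 2 ≠ 0 := by nlinarith [norm_nonneg z₀]
    exact ContinuousAt.div (by fun_prop) (by fun_prop) hden
  refine (han z₀ hz₀).not_eventually_le_re_mul_logDeriv hz₀_ne hzero hnot (B z₀ - 2) ?_
  filter_upwards [nhdsWithin_le_nhds (continuousAt_const.eventually_lt hB (sub_one_lt (B z₀))),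
    nhdsWithin_le_nhds (isOpen_ball.mem_nhds hz₀)] with z hBz hz
  have hkz := hkoebe z hz
  rw [mul_div_assoc, Complex.add_re, Complex.one_re] at hkz
  rw [logDeriv_apply]
  linarith

theorem sq_lt_norm_of_koebe_bound {r : ℝ} {K : ℂ} (hr₀ : 0 ≤ r) (hr : r < √7 - 2)
    (hK : (1 - 4*r + r^2) / (1 - r^2) ≤ K.re) :
    r ^ 2 < ‖((2 - r^2 : ℝ) : ℂ) + ((1 - r^2 : ℝ) : ℂ) * K‖ := by
  have hr_root : r ^ 2 < 3 - 4 * r := by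
    have := Real.sq_sqrt (show (0 : ℝ) ≤ 7 by norm_num)
    nlinarith [Real.sqrt_nonneg 7]
  have hden : 0 < 1 - r ^ 2 := by nlinarith
  have hK' : 1 - 4*r + r^2 ≤ (1 - r^2) * K.re := (div_le_iff₀' hden).mp hK
  calc r ^ 2 < 3 - 4 * r := hr_root
    _ ≤ (((2 - r^2 : ℝ) : ℂ) + ((1 - r^2 : ℝ) : ℂ) * K).re := by
      simp only [Complex.add_re, Complex.re_ofReal_mul, Complex.ofReal_re]
      linarith
    _ ≤ _ := Complex.re_le_norm _

theorem stmt_9_general (h : ℂ → ℂ)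
    (hd : DifferentiableOn ℂ h (Metric.ball 0 1))
    (h1 : deriv h 0 = 1)
    (hkoebe : ∀ z ∈ Metric.ball (0 : ℂ) 1,
      (1 - 4*‖z‖ + ‖z‖^2) / (1 - ‖z‖^2) ≤ (1 + z * deriv (deriv h) z / deriv h z).re) :
    ∀ z : ℂ, ‖z‖ < Real.sqrt 7 - 2 →
      ‖(deriv h z / 2) * (((2 - ‖z‖^2 : ℝ) : ℂ) + ((1 - ‖z‖^2 : ℝ) : ℂ) *
          (1 + z * deriv (deriv h) z / deriv h z))‖^2
        - ‖-(1/2 : ℂ) * z^2 * deriv h z‖^2 > 0 := by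
  intro z hz
  have hz₁ : z ∈ ball (0 : ℂ) 1 := by
    have : √7 < 3 := by rw [Real.sqrt_lt' three_pos]; norm_num
    rw [mem_ball_zero_iff]
    linarith
  have hh' : 0 < ‖deriv h z‖ := norm_pos_iff.mpr (deriv_ne_zero_of_koebe_bound hd h1 hkoebe hz₁)
  have hA := sq_lt_norm_of_koebe_bound (norm_nonneg z) hz (hkoebe z hz₁)
  simp only [norm_mul, norm_div, norm_neg, norm_pow, Complex.norm_ofNat, one_div, norm_inv]
  nlinarith [mul_pos (pow_pos hh' 2) (sub_pos.mpr (pow_lt_pow_left₀ hA (by positivity) two_ne_zero))]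

theorem stmt_9 (h : ℂ → ℂ)
    (hd : DifferentiableOn ℂ h (Metric.ball 0 1))
    (hinj : Set.InjOn h (Metric.ball 0 1))
    (h0 : h 0 = 0) (h1 : deriv h 0 = 1)
    (hkoebe : ∀ z ∈ Metric.ball (0 : ℂ) 1,
      (1 - 4*‖z‖ + ‖z‖^2) / (1 - ‖z‖^2) ≤ (1 + z * deriv (deriv h) z / deriv h z).re) :
    ∀ z : ℂ, ‖z‖ < Real.sqrt 7 - 2 →
      ‖(deriv h z / 2) * (((2 - ‖z‖^2 : ℝ) : ℂ) + ((1 - ‖z‖^2 : ℝ) : ℂ) *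
          (1 + z * deriv (deriv h) z / deriv h z))‖^2
        - ‖-(1/2 : ℂ) * z^2 * deriv h z‖^2 > 0 :=
  stmt_9_general h hd h1 hkoebe
end

section
/- Let h be analytic on 𝔻 with h(0)=0, h'(0)=1, convex of order α for some α ∈ [1/2, 1), i.e., Re(1 + z h''(z)/h'(z)) > α and moreover |1 + z h''(z)/h'(z)| ≤ (1 + (1-2α)|z|)/(1 - |z|) on 𝔻 (subordination bound). Then u(z) = h(z) + (1-|z|²)(1/2)z h'(z) is injective on 𝔻. -/
/-!
Write `B(z) = 1 + z h''(z) / h'(z)` and `u = radialPerturbation h`.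

The modulus bound makes `h''/h'` bounded near every point of `𝔻 \ {0}`, while the logarithmic
derivative of `h'` has a pole at any zero of `h'`; so `h'` has no zeros and `h` has a
holomorphic inverse on `h(𝔻)`.

`Re B ≥ 0`: by subordination (Schwarz's lemma applied to `h⁻¹ ∘ F`) every `h(|z| < r)` is
convex. If `|z₀| = r`, a real functional `f` supporting `h(|z| < r)` at `h(z₀)` is maximal at
`z₀` on the closed disc, so along the circle `θ ↦ z₀ e^{iθ}` it has vanishing first and
non-positive second derivative, and along the radius a non-negative one. These say
`f(i z₀ h') = 0`, `f(z₀ h' B) ≥ 0` and `f(z₀ h') > 0`, whence `Re B ≥ 0`.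

Injectivity: given `z₁ ≠ z₂`, put `δ = h z₁ - h z₂` and let `γ` be the preimage under `h` of
the segment from `h z₂` to `h z₁`, so that `h'(γ) γ' = δ`. Then
`d/dt Re(conj δ · u(γ t)) = |δ|² - |h'|² ⟨γ, γ'⟩² + (1 - |γ|²) |δ|² Re B / 2
  ≥ (1 - |γ|²) |δ|² (1 + Re B / 2) > 0`,
so `Re(conj δ · u)` is strictly larger at `z₁` than at `z₂`.
-/

open Filter Topology Metric Set Function Complex ComplexConjugate

theorem IsLocalMax.nonpos_of_hasDerivAt_deriv {φ Φ : ℝ → ℝ} {x L : ℝ} (hmax : IsLocalMax φ x)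
    (hφ : ∀ᶠ y in 𝓝 x, HasDerivAt φ (Φ y) y) (hΦ : HasDerivAt Φ L x) : L ≤ 0 := by
  have hL : deriv (deriv φ) x = L :=
    (hΦ.congr_of_eventuallyEq (hφ.mono fun _ hy ↦ hy.deriv)).deriv
  by_contra! hpos
  have hmin := isLocalMin_of_deriv_deriv_pos (hL ▸ hpos) hmax.deriv_eq_zero
    hφ.self_of_nhds.continuousAt
  have hconst : φ =ᶠ[𝓝 x] fun _ ↦ φ x := (hmin.and hmax).mono fun _ hy ↦ le_antisymm hy.2 hy.1
  have : deriv (deriv φ) x = 0 := by simp [hconst.deriv.deriv_eq]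
  linarith

theorem HasDerivAt.nonneg_of_isMaxOn_Icc {ψ : ℝ → ℝ} {a b ψ' : ℝ} (hab : a < b)
    (hψ : HasDerivAt ψ ψ' b) (hmax : IsMaxOn ψ (Icc a b) b) : 0 ≤ ψ' := by
  have hcone : a - b ∈ posTangentConeAt (Icc a b) b :=
    mem_posTangentConeAt_of_segment_subset (by
      rw [add_sub_cancel, segment_symm, segment_eq_Icc hab.le])
  have := hmax.localize.hasFDerivWithinAt_nonpos hψ.hasFDerivAt.hasFDerivWithinAt hcone
  simp only [ContinuousLinearMap.toSpanSingleton_apply, smul_eq_mul] at this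
  nlinarith

theorem re_nonneg_of_apply_mul {f : ℂ →L[ℝ] ℝ} (hf : f ≠ 0) {c B : ℂ} (hc : c ≠ 0)
    (hc₁ : 0 ≤ f c) (hcI : f (c * I) = 0) (hcB : 0 ≤ f (c * B)) : 0 ≤ B.re := by
  have hsplit : ∀ w, f (c * w) = w.re * f c := fun w ↦ by
    have : c * w = w.re • c + w.im • (c * I) := by
      conv_lhs => rw [← re_add_im w]
      simp only [real_smul]; ring
    rw [this, map_add, map_smul, map_smul, hcI, smul_eq_mul, smul_zero, add_zero]
  have hfc : f c ≠ 0 := fun h0 ↦ hf <| ContinuousLinearMap.ext fun v ↦ by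
    simpa [mul_div_cancel₀ _ hc, h0] using hsplit (v / c)
  rw [hsplit] at hcB
  exact nonneg_of_mul_nonneg_left hcB (lt_of_le_of_ne hc₁ (Ne.symm hfc))

theorem AnalyticAt.tendsto_logDeriv_cobounded {f : ℂ → ℂ} {z₀ : ℂ} (hf : AnalyticAt ℂ f z₀)
    (hz₀ : f z₀ = 0) (hne : ¬ f =ᶠ[𝓝 z₀] 0) :
    Tendsto (logDeriv f) (𝓝[≠] z₀) (Bornology.cobounded ℂ) := by
  refine tendsto_cobounded_of_meromorphicOrderAt_neg ?_
  have hord : analyticOrderAt f z₀ ≠ 0 := by simp [analyticOrderAt_eq_zero, hf, hz₀]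
  have htop : analyticOrderAt f z₀ ≠ ⊤ := by rwa [Ne, analyticOrderAt_eq_top]
  rw [meromorphicOrderAt_logDeriv_eq_neg_one hf.meromorphicAt]
  · decide
  all_goals simp [hf.meromorphicOrderAt_eq, hord, htop]

theorem AnalyticOnNhd.ne_zero_of_isBoundedUnder_logDeriv {f : ℂ → ℂ} {U : Set ℂ}
    (hf : AnalyticOnNhd ℂ f U) (hU : IsPreconnected U) {z₀ z₁ : ℂ} (hz₀ : z₀ ∈ U) (hz₁ : z₁ ∈ U)
    (hf₁ : f z₁ ≠ 0) (hb : IsBoundedUnder (· ≤ ·) (𝓝[≠] z₀) (‖logDeriv f ·‖)) : f z₀ ≠ 0 := by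
  intro hz
  have hne : ¬ f =ᶠ[𝓝 z₀] 0 := fun hev ↦
    hf₁ (hf.eqOn_zero_of_preconnected_of_eventuallyEq_zero hU hz₀ hev hz₁)
  exact not_isBoundedUnder_of_tendsto_atTop
    (tendsto_norm_atTop_iff_cobounded.mpr ((hf z₀ hz₀).tendsto_logDeriv_cobounded hz hne)) hb

section Univalent

variable {h : ℂ → ℂ}

theorem isBoundedUnder_logDeriv_deriv {α : ℝ} {z₀ : ℂ} (hz₀ : z₀ ∈ ball (0 : ℂ) 1)
    (hz₀' : z₀ ≠ 0)
    (hbound : ∀ z ∈ ball (0 : ℂ) 1,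
      ‖1 + z * deriv (deriv h) z / deriv h z‖ ≤ (1 + (1 - 2*α)*‖z‖) / (1 - ‖z‖)) :
    IsBoundedUnder (· ≤ ·) (𝓝[≠] z₀) (‖logDeriv (deriv h) ·‖) := by
  set M : ℂ → ℝ := fun z ↦ ((1 + (1 - 2*α)*‖z‖) / (1 - ‖z‖) + 1) / ‖z‖
  have hM : ContinuousAt M z₀ := by
    have : 1 - ‖z₀‖ ≠ 0 := (sub_pos.mpr (mem_ball_zero_iff.mp hz₀)).ne'
    fun_prop (disch := first | assumption | exact norm_ne_zero_iff.mpr hz₀')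
  refine (hM.tendsto.isBoundedUnder_le.mono nhdsWithin_le_nhds).mono_le ?_
  filter_upwards [nhdsWithin_le_nhds (isOpen_ball.mem_nhds hz₀),
    nhdsWithin_le_nhds ((isOpen_ne (x := (0 : ℂ))).mem_nhds hz₀')] with z hz hz0
  have hpos : 0 < ‖z‖ := norm_pos_iff.mpr hz0
  rw [logDeriv_apply, le_div_iff₀ hpos, ← norm_mul, mul_comm, ← mul_div_assoc]
  calc ‖z * deriv (deriv h) z / deriv h z‖
      ≤ ‖1 + z * deriv (deriv h) z / deriv h z‖ + 1 := by
        simpa using norm_sub_le (1 + z * deriv (deriv h) z / deriv h z) 1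
    _ ≤ _ := by gcongr; exact hbound z hz

theorem deriv_ne_zero_of_bound {α : ℝ} (hd : DifferentiableOn ℂ h (ball 0 1))
    (h1 : deriv h 0 = 1)
    (hbound : ∀ z ∈ ball (0 : ℂ) 1,
      ‖1 + z * deriv (deriv h) z / deriv h z‖ ≤ (1 + (1 - 2*α)*‖z‖) / (1 - ‖z‖)) :
    ∀ z ∈ ball (0 : ℂ) 1, deriv h z ≠ 0 := by
  intro z hz
  rcases eq_or_ne z 0 with rfl | hz0
  · simp [h1]
  exact (hd.analyticOnNhd isOpen_ball).deriv.ne_zero_of_isBoundedUnder_logDeriv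
    (convex_ball 0 1).isPreconnected hz (mem_ball_self one_pos) (by simp [h1])
    (isBoundedUnder_logDeriv_deriv hz hz0 hbound)

theorem hasDerivAt_invFunOn {U : Set ℂ} (hd : DifferentiableOn ℂ h U) (hU : IsOpen U)
    (hinj : InjOn h U) {z : ℂ} (hz : z ∈ U) (hz' : deriv h z ≠ 0) :
    HasDerivAt (invFunOn h U) (deriv h z)⁻¹ (h z) :=
  ((hd.analyticOnNhd hU z hz).hasStrictDerivAt.to_local_left_inverse hz'
    (eventually_of_mem (hU.mem_nhds hz) fun _ hx ↦ hinj.leftInvOn_invFunOn hx)).hasDerivAt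

theorem isOpen_image_of_deriv_ne_zero {U : Set ℂ} (hd : DifferentiableOn ℂ h U) (hU : IsOpen U)
    (hne : ∀ z ∈ U, deriv h z ≠ 0) : IsOpen (h '' U) := by
  refine isOpen_iff_mem_nhds.mpr ?_
  rintro _ ⟨z, hz, rfl⟩
  rw [← (hd.analyticOnNhd hU z hz).hasStrictDerivAt.map_nhds_eq (hne z hz)]
  exact image_mem_map (hU.mem_nhds hz)

theorem exists_norm_le_apply_eq_of_subordinate (hd : DifferentiableOn ℂ h (ball 0 1))
    (hinj : InjOn h (ball 0 1)) (hne : ∀ z ∈ ball (0 : ℂ) 1, deriv h z ≠ 0)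
    {F : ℂ → ℂ} (hF : DifferentiableOn ℂ F (ball 0 1))
    (hFh : MapsTo F (ball 0 1) (h '' ball 0 1)) (hF0 : F 0 = h 0) {ζ : ℂ}
    (hζ : ζ ∈ ball (0 : ℂ) 1) : ∃ ξ, ‖ξ‖ ≤ ‖ζ‖ ∧ h ξ = F ζ := by
  set g := invFunOn h (ball (0 : ℂ) 1)
  have hg : DifferentiableOn ℂ g (h '' ball 0 1) := by
    rintro _ ⟨z, hz, rfl⟩
    exact (hasDerivAt_invFunOn hd isOpen_ball hinj hz (hne z hz)).differentiableAt
      |>.differentiableWithinAt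
  have hmaps : MapsTo (g ∘ F) (ball 0 1) (ball 0 1) :=
    (surjOn_image h _).mapsTo_invFunOn.comp hFh
  have h0 : (g ∘ F) 0 = 0 := by
    rw [comp_apply, hF0]; exact hinj.leftInvOn_invFunOn (mem_ball_self one_pos)
  refine ⟨g (F ζ), ?_, (surjOn_image h _).rightInvOn_invFunOn (hFh hζ)⟩
  exact Complex.norm_le_norm_of_mapsTo_ball (hg.comp hF hFh)
    (hmaps.mono_right ball_subset_closedBall) h0 (mem_ball_zero_iff.mp hζ)

theorem convex_image_ball (hd : DifferentiableOn ℂ h (ball 0 1))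
    (hinj : InjOn h (ball 0 1)) (hne : ∀ z ∈ ball (0 : ℂ) 1, deriv h z ≠ 0)
    (hconv : Convex ℝ (h '' ball 0 1)) {r : ℝ} (hr : r ≤ 1) :
    Convex ℝ (h '' ball 0 r) := by
  rintro _ ⟨z₁, hz₁, rfl⟩ _ ⟨z₂, hz₂, rfl⟩ a b ha hb hab
  wlog hle : ‖z₂‖ ≤ ‖z₁‖ generalizing z₁ z₂ a b
  · rw [add_comm]
    exact this z₂ hz₂ z₁ hz₁ hb ha (by linarith) (le_of_not_ge hle)
  rcases eq_or_ne z₁ 0 with rfl | hz₁0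
  · obtain rfl : z₂ = 0 := norm_le_zero_iff.mp (by simpa using hle)
    rw [← add_smul, hab, one_smul]
    exact mem_image_of_mem h hz₁
  set c := z₂ / z₁
  have hc : ‖c‖ ≤ 1 := by rw [norm_div]; exact div_le_one_of_le₀ hle (norm_nonneg _)
  have hcball : MapsTo (c * ·) (ball (0 : ℂ) 1) (ball 0 1) := fun ζ hζ ↦ by
    rw [mem_ball_zero_iff, norm_mul] at *
    exact mul_lt_one_of_nonneg_of_lt_one_right hc (norm_nonneg ζ) hζ
  obtain ⟨ξ, hξ, hξeq⟩ := exists_norm_le_apply_eq_of_subordinate hd hinj hne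
    (F := fun ζ ↦ a • h ζ + b • h (c * ζ))
    ((hd.const_smul a).add
      ((hd.comp (differentiable_id.const_mul c).differentiableOn hcball).const_smul b))
    (fun ζ hζ ↦ hconv (mem_image_of_mem h hζ) (mem_image_of_mem h (hcball hζ)) ha hb hab)
    (by simp only [mul_zero, ← add_smul, hab, one_smul]) (ball_subset_ball hr hz₁)
  refine ⟨ξ, mem_ball_zero_iff.mpr (hξ.trans_lt (mem_ball_zero_iff.mp hz₁)), ?_⟩
  rw [hξeq, div_mul_cancel₀ _ hz₁0]

section MaxOnClosedBall

variable {f : ℂ →L[ℝ] ℝ} {z₀ : ℂ}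

theorem apply_mul_deriv_nonneg_of_isMaxOn (hh : DifferentiableAt ℂ h z₀)
    (hmax : IsMaxOn (f ∘ h) (closedBall 0 ‖z₀‖) z₀) : 0 ≤ f (z₀ * deriv h z₀) := by
  have hray : HasDerivAt (fun s : ℝ ↦ (s : ℂ) * z₀) z₀ 1 := by
    simpa using ((hasDerivAt_id (1 : ℂ)).mul_const z₀).comp_ofReal
  have hh' : HasDerivAt h (deriv h z₀) ((1 : ℝ) * z₀) := by simpa using hh.hasDerivAt
  rw [mul_comm]
  refine (f.hasFDerivAt.comp_hasDerivAt 1 (hh'.comp 1 hray)).nonneg_of_isMaxOn_Icc zero_lt_one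
    fun s hs ↦ ?_
  have hs' : (s : ℂ) * z₀ ∈ closedBall 0 ‖z₀‖ := by
    rw [mem_closedBall_zero_iff, norm_mul, norm_real, Real.norm_of_nonneg hs.1]
    exact mul_le_of_le_one_left (norm_nonneg _) hs.2
  simpa using hmax hs'

theorem hasDerivAt_circle (z₀ : ℂ) (θ : ℝ) :
    HasDerivAt (fun θ : ℝ ↦ z₀ * exp (θ * I)) (I * (z₀ * exp (θ * I))) θ := by
  convert (((hasDerivAt_id' (θ : ℂ)).mul_const I).cexp.const_mul z₀).comp_ofReal using 1
  ring

theorem norm_mul_exp_mul_I (z₀ : ℂ) (θ : ℝ) : ‖z₀ * exp (θ * I)‖ = ‖z₀‖ := by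
  rw [norm_mul, norm_exp_ofReal_mul_I, mul_one]

theorem hasDerivAt_comp_circle (hh : AnalyticOnNhd ℂ h (sphere 0 ‖z₀‖)) (θ : ℝ) :
    HasDerivAt (fun θ : ℝ ↦ f (h (z₀ * exp (θ * I))))
      (f (I * (z₀ * exp (θ * I)) * deriv h (z₀ * exp (θ * I)))) θ := by
  have hc := hh _ (mem_sphere_zero_iff_norm.mpr (norm_mul_exp_mul_I z₀ θ))
  rw [mul_comm]
  exact f.hasFDerivAt.comp_hasDerivAt θ
    (hc.differentiableAt.hasDerivAt.comp θ (hasDerivAt_circle z₀ θ))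

theorem isLocalMax_comp_circle (hmax : IsMaxOn (f ∘ h) (sphere 0 ‖z₀‖) z₀) :
    IsLocalMax (fun θ : ℝ ↦ f (h (z₀ * exp (θ * I)))) 0 :=
  IsMaxOn.isLocalMax (fun θ _ ↦ by
    simpa using hmax (mem_sphere_zero_iff_norm.mpr (norm_mul_exp_mul_I z₀ θ))) univ_mem

theorem apply_mul_deriv_mul_I_eq_zero_of_isMaxOn (hh : AnalyticOnNhd ℂ h (sphere 0 ‖z₀‖))
    (hmax : IsMaxOn (f ∘ h) (sphere 0 ‖z₀‖) z₀) : f (z₀ * deriv h z₀ * I) = 0 := by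
  simpa [mul_comm I, mul_right_comm] using
    (isLocalMax_comp_circle hmax).hasDerivAt_eq_zero (hasDerivAt_comp_circle hh 0)

theorem apply_add_sq_mul_deriv_deriv_nonneg_of_isMaxOn (hh : AnalyticOnNhd ℂ h (sphere 0 ‖z₀‖))
    (hmax : IsMaxOn (f ∘ h) (sphere 0 ‖z₀‖) z₀) :
    0 ≤ f (z₀ * deriv h z₀ + z₀ ^ 2 * deriv (deriv h) z₀) := by
  have hz₀ : z₀ ∈ sphere 0 ‖z₀‖ := mem_sphere_zero_iff_norm.mpr rfl
  have hc := hasDerivAt_circle z₀ 0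
  have hdd : HasDerivAt (fun θ : ℝ ↦ deriv h (z₀ * exp (θ * I)))
      (deriv (deriv h) z₀ * (I * z₀)) 0 := by
    have := (hh z₀ hz₀).deriv.differentiableAt.hasDerivAt.comp_of_eq 0 hc (by simp)
    simp only [ofReal_zero, zero_mul, exp_zero, mul_one] at this
    exact this
  have := (isLocalMax_comp_circle hmax).nonpos_of_hasDerivAt_deriv
    (Eventually.of_forall (hasDerivAt_comp_circle hh))
    (f.hasFDerivAt.comp_hasDerivAt (0 : ℝ) ((hc.const_mul I).mul hdd))
  have key : I * (I * (z₀ * exp ((0 : ℝ) * I))) * deriv h (z₀ * exp ((0 : ℝ) * I))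
      + I * (z₀ * exp ((0 : ℝ) * I)) * (deriv (deriv h) z₀ * (I * z₀))
      = -(z₀ * deriv h z₀ + z₀ ^ 2 * deriv (deriv h) z₀) := by
    simp only [ofReal_zero, zero_mul, exp_zero, mul_one]
    linear_combination (z₀ * deriv h z₀ + z₀ ^ 2 * deriv (deriv h) z₀) * I_sq
  rw [key, map_neg] at this
  linarith

end MaxOnClosedBall

theorem exists_ne_zero_isMaxOn_comp_closedBall (hd : DifferentiableOn ℂ h (ball 0 1))
    (hinj : InjOn h (ball 0 1)) (hne : ∀ z ∈ ball (0 : ℂ) 1, deriv h z ≠ 0)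
    (hconv : Convex ℝ (h '' ball 0 1)) {z₀ : ℂ} (hz₀ : z₀ ∈ ball (0 : ℂ) 1) (hz₀0 : z₀ ≠ 0) :
    ∃ f : ℂ →L[ℝ] ℝ, f ≠ 0 ∧ IsMaxOn (f ∘ h) (closedBall 0 ‖z₀‖) z₀ := by
  have hr1 : ‖z₀‖ < 1 := mem_ball_zero_iff.mp hz₀
  have hr0 : ‖z₀‖ ≠ 0 := norm_ne_zero_iff.mpr hz₀0
  have hsub : ball (0 : ℂ) ‖z₀‖ ⊆ ball 0 1 := ball_subset_ball hr1.le
  have hK : IsOpen (h '' ball 0 ‖z₀‖) :=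
    isOpen_image_of_deriv_ne_zero (hd.mono hsub) isOpen_ball fun z hz ↦ hne z (hsub hz)
  have hz₀K : h z₀ ∉ h '' ball 0 ‖z₀‖ := by
    rintro ⟨z, hz, hzeq⟩
    rw [hinj (hsub hz) hz₀ hzeq, mem_ball_zero_iff] at hz
    exact lt_irrefl _ hz
  obtain ⟨f, hf⟩ := geometric_hahn_banach_open_point
    (convex_image_ball hd hinj hne hconv hr1.le) hK hz₀K
  refine ⟨f, ?_, fun ζ hζ ↦ ?_⟩
  · rintro rfl
    simpa using hf (h 0) (mem_image_of_mem h (mem_ball_self (norm_pos_iff.mpr hz₀0)))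
  rw [← closure_ball 0 hr0] at hζ
  have hcont : ContinuousOn h (closure (ball 0 ‖z₀‖)) :=
    hd.continuousOn.mono (by rw [closure_ball 0 hr0]; exact closedBall_subset_ball hr1)
  exact closure_minimal (fun v hv ↦ (hf v hv).le) (isClosed_le f.continuous continuous_const)
    (hcont.image_closure ⟨ζ, hζ, rfl⟩)

theorem re_one_add_mul_deriv_deriv_div_nonneg (hd : DifferentiableOn ℂ h (ball 0 1))
    (hinj : InjOn h (ball 0 1)) (hne : ∀ z ∈ ball (0 : ℂ) 1, deriv h z ≠ 0)
    (hconv : Convex ℝ (h '' ball 0 1)) {z₀ : ℂ} (hz₀ : z₀ ∈ ball (0 : ℂ) 1) :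
    0 ≤ (1 + z₀ * deriv (deriv h) z₀ / deriv h z₀).re := by
  rcases eq_or_ne z₀ 0 with rfl | hz₀0
  · simp
  have hr1 : ‖z₀‖ < 1 := mem_ball_zero_iff.mp hz₀
  obtain ⟨f, hf0, hmax⟩ := exists_ne_zero_isMaxOn_comp_closedBall hd hinj hne hconv hz₀ hz₀0
  have hA : AnalyticOnNhd ℂ h (sphere 0 ‖z₀‖) := (hd.analyticOnNhd isOpen_ball).mono
    (sphere_subset_closedBall.trans (closedBall_subset_ball hr1))
  have hcB : z₀ * deriv h z₀ * (1 + z₀ * deriv (deriv h) z₀ / deriv h z₀)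
      = z₀ * deriv h z₀ + z₀ ^ 2 * deriv (deriv h) z₀ := by
    field_simp [hne z₀ hz₀]
  have hsphere := hmax.on_subset sphere_subset_closedBall
  refine re_nonneg_of_apply_mul hf0 (mul_ne_zero hz₀0 (hne z₀ hz₀))
    (apply_mul_deriv_nonneg_of_isMaxOn (hd.differentiableAt (isOpen_ball.mem_nhds hz₀)) hmax)
    (apply_mul_deriv_mul_I_eq_zero_of_isMaxOn hA hsphere) ?_
  rw [hcB]
  exact apply_add_sq_mul_deriv_deriv_nonneg_of_isMaxOn hA hsphere

noncomputable def radialPerturbation (h : ℂ → ℂ) (z : ℂ) : ℂ :=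
  h z + ((1 - ‖z‖ ^ 2 : ℝ) : ℂ) * (1 / 2 : ℂ) * z * deriv h z

theorem hasDerivAt_radialPerturbation_comp {γ : ℝ → ℂ} {ζ : ℂ} {t : ℝ}
    (hh : AnalyticAt ℂ h (γ t)) (hγ : HasDerivAt γ ζ t) :
    HasDerivAt (fun s ↦ radialPerturbation h (γ s))
      (ζ * deriv h (γ t) - (inner ℝ (γ t) ζ : ℂ) * γ t * deriv h (γ t)
        + ((1 - ‖γ t‖ ^ 2) / 2 : ℝ) * (ζ * deriv h (γ t) + γ t * ζ * deriv (deriv h) (γ t))) t := by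
  have h₁ := hh.differentiableAt.hasDerivAt.comp t hγ
  have h₂ := hh.deriv.differentiableAt.hasDerivAt.comp t hγ
  have hw := ((hγ.norm_sq.const_sub 1).ofReal_comp.mul_const (1 / 2 : ℂ)).mul hγ |>.mul h₂
  refine (h₁.add hw).congr_deriv ?_
  simp only [comp_apply, Pi.mul_apply]
  push_cast
  ring

theorem re_conj_mul_deriv_radialPerturbation_pos {z ζ d dd : ℂ} (hd : d ≠ 0) (hζ : ζ ≠ 0)
    (hz : ‖z‖ < 1) (hB : 0 ≤ (1 + z * dd / d).re) :
    0 < (conj (ζ * d) * (ζ * d - (inner ℝ z ζ : ℂ) * z * d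
      + ((1 - ‖z‖ ^ 2) / 2 : ℝ) * (ζ * d + z * ζ * dd))).re := by
  set X := inner ℝ z ζ
  have hX : X ^ 2 ≤ ‖z‖ ^ 2 * ‖ζ‖ ^ 2 := by
    rw [← mul_pow, ← sq_abs]
    exact pow_le_pow_left₀ (abs_nonneg X) (abs_real_inner_le_norm z ζ) 2
  have hXre : (conj ζ * z).re = X := by
    rw [show X = (ζ * conj z).re from Complex.inner z ζ, ← conj_re, map_mul, conj_conj]
  have hexpand : conj (ζ * d) * (ζ * d - (X : ℂ) * z * d
      + ((1 - ‖z‖ ^ 2) / 2 : ℝ) * (ζ * d + z * ζ * dd))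
      = ((‖ζ‖ ^ 2 * ‖d‖ ^ 2 : ℝ) : ℂ) - ((X * ‖d‖ ^ 2 : ℝ) : ℂ) * (conj ζ * z)
        + (((1 - ‖z‖ ^ 2) / 2 * (‖ζ‖ ^ 2 * ‖d‖ ^ 2) : ℝ) : ℂ) * (1 + z * dd / d) := by
    push_cast
    rw [map_mul, ← mul_conj' ζ, ← mul_conj' d, ← mul_conj' z]
    field_simp
  rw [hexpand, add_re, sub_re, ofReal_re, re_ofReal_mul, re_ofReal_mul, hXre]
  have hz2 : ‖z‖ ^ 2 < 1 := by nlinarith [norm_nonneg z]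
  have hζd : 0 < ‖ζ‖ ^ 2 * ‖d‖ ^ 2 := by positivity
  nlinarith [mul_nonneg (mul_nonneg (sub_nonneg.mpr hz2.le) hζd.le) hB,
    mul_le_mul_of_nonneg_right hX (sq_nonneg ‖d‖)]

theorem re_conj_mul_radialPerturbation_lt (hd : DifferentiableOn ℂ h (ball 0 1))
    (hinj : InjOn h (ball 0 1)) (hne : ∀ z ∈ ball (0 : ℂ) 1, deriv h z ≠ 0)
    (hconv : Convex ℝ (h '' ball 0 1)) {z₁ z₂ : ℂ} (hz₁ : z₁ ∈ ball (0 : ℂ) 1)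
    (hz₂ : z₂ ∈ ball (0 : ℂ) 1) (h12 : h z₁ ≠ h z₂) :
    (conj (h z₁ - h z₂) * radialPerturbation h z₂).re
      < (conj (h z₁ - h z₂) * radialPerturbation h z₁).re := by
  set δ := h z₁ - h z₂
  have hsurj := surjOn_image h (ball (0 : ℂ) 1)
  have hseg : ∀ t ∈ Icc (0 : ℝ) 1, h z₂ + t • δ ∈ h '' ball 0 1 := fun t ht ↦
    hconv.add_smul_sub_mem (mem_image_of_mem h hz₂) (mem_image_of_mem h hz₁) ht
  set γ : ℝ → ℂ := fun t ↦ invFunOn h (ball 0 1) (h z₂ + t • δ)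
  set E : ℝ → ℝ := fun t ↦ (conj δ * radialPerturbation h (γ t)).re
  have hE : ∀ t ∈ Icc (0 : ℝ) 1, ∃ e, HasDerivAt E e t ∧ 0 < e := by
    intro t ht
    have hγt : γ t ∈ ball 0 1 := hsurj.mapsTo_invFunOn (hseg t ht)
    have hd₀ := hne _ hγt
    have hγ' : HasDerivAt γ ((deriv h (γ t))⁻¹ * δ) t :=
      (hasDerivAt_invFunOn hd isOpen_ball hinj hγt hd₀).comp_of_eq t
        (by simpa using ((hasDerivAt_id t).smul_const δ).const_add (h z₂))
        (hsurj.rightInvOn_invFunOn (hseg t ht))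
    refine ⟨_, reCLM.hasFDerivAt.comp_hasDerivAt t
      ((hasDerivAt_radialPerturbation_comp (hd.analyticOnNhd isOpen_ball _ hγt) hγ').const_mul
        (conj δ)), ?_⟩
    have hpos := re_conj_mul_deriv_radialPerturbation_pos hd₀
      (mul_ne_zero (inv_ne_zero hd₀) (sub_ne_zero.mpr h12)) (mem_ball_zero_iff.mp hγt)
      (re_one_add_mul_deriv_deriv_div_nonneg hd hinj hne hconv hγt)
    have hζ : (deriv h (γ t))⁻¹ * δ * deriv h (γ t) = δ := by field_simp
    rw [reCLM_apply, hζ]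
    rwa [hζ] at hpos
  have hmono : StrictMonoOn E (Icc 0 1) :=
    strictMonoOn_of_deriv_pos (convex_Icc 0 1)
      (fun t ht ↦ (hE t ht).choose_spec.1.continuousAt.continuousWithinAt) fun t ht ↦ by
        rw [interior_Icc] at ht
        obtain ⟨e, he, hpos⟩ := hE t (Ioo_subset_Icc_self ht)
        rwa [he.deriv]
  have hγ0 : γ 0 = z₂ := by simp [γ, hinj.leftInvOn_invFunOn hz₂]
  have hγ1 : γ 1 = z₁ := by simp [γ, δ, hinj.leftInvOn_invFunOn hz₁]
  simpa [E, hγ0, hγ1] using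
    hmono (left_mem_Icc.mpr zero_le_one) (right_mem_Icc.mpr zero_le_one) zero_lt_one

end Univalent

theorem stmt_11_general (α : ℝ) (h : ℂ → ℂ)
    (hd : DifferentiableOn ℂ h (Metric.ball 0 1))
    (hinj : Set.InjOn h (Metric.ball 0 1))
    (hconv : Convex ℝ (h '' Metric.ball 0 1))
    (h1 : deriv h 0 = 1)
    (hbound : ∀ z ∈ Metric.ball (0 : ℂ) 1,
      ‖1 + z * deriv (deriv h) z / deriv h z‖ ≤ (1 + (1 - 2*α)*‖z‖) / (1 - ‖z‖)) :
    Set.InjOn (fun z : ℂ => h z + ((1 - ‖z‖^2 : ℝ) : ℂ) * (1/2 : ℂ) * z * deriv h z)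
      (Metric.ball 0 1) := by
  have hne := deriv_ne_zero_of_bound hd h1 hbound
  intro z₁ hz₁ z₂ hz₂ hu
  by_contra h12
  have hlt := re_conj_mul_radialPerturbation_lt hd hinj hne hconv hz₁ hz₂
    fun hh ↦ h12 (hinj hz₁ hz₂ hh)
  change radialPerturbation h z₁ = radialPerturbation h z₂ at hu
  rw [hu] at hlt
  exact lt_irrefl _ hlt

theorem stmt_11 (α : ℝ) (hα1 : 1/2 ≤ α) (hα2 : α < 1) (h : ℂ → ℂ)
    (hd : DifferentiableOn ℂ h (Metric.ball 0 1))
    (hinj : Set.InjOn h (Metric.ball 0 1))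
    (hconv : Convex ℝ (h '' Metric.ball 0 1))
    (h0 : h 0 = 0) (h1 : deriv h 0 = 1)
    (hbound : ∀ z ∈ Metric.ball (0 : ℂ) 1,
      ‖1 + z * deriv (deriv h) z / deriv h z‖ ≤ (1 + (1 - 2*α)*‖z‖) / (1 - ‖z‖)) :
    Set.InjOn (fun z : ℂ => h z + ((1 - ‖z‖^2 : ℝ) : ℂ) * (1/2 : ℂ) * z * deriv h z)
      (Metric.ball 0 1) :=
  stmt_11_general α h hd hinj hconv h1 hbound
end

section
/- For all z, ζ in the open unit disk 𝔻, the biharmonic Green function Γ(z,ζ) = |z-ζ|²·log(|z-ζ|²/|1-z·conj(ζ)|²) + (1-|z|²)(1-|ζ|²) is positive whenever z ≠ ζ (and equals (1-|z|²)² ≥ 0 when z = ζ, interpreting 0·log 0 = 0). -/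
/-! The Blaschke-factor identity `|1 - z ζ̄|² = |z - ζ|² + (1 - |z|²)(1 - |ζ|²)` turns the claim into
`0 < a log (a / (a + c)) + c` for `a = |z - ζ|² > 0` and `c = (1 - |z|²)(1 - |ζ|²) > 0`, which is the
strict inequality `log x < x - 1` at `x = (a + c) / a`. -/

open Real

theorem Complex.sq_norm_one_sub_mul_conj (z ζ : ℂ) :
    ‖1 - z * starRingEnd ℂ ζ‖ ^ 2 = ‖z - ζ‖ ^ 2 + (1 - ‖z‖ ^ 2) * (1 - ‖ζ‖ ^ 2) := by
  simp only [Complex.sq_norm, Complex.normSq_apply, Complex.sub_re, Complex.sub_im,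
    Complex.one_re, Complex.one_im, Complex.mul_re, Complex.mul_im, Complex.conj_re,
    Complex.conj_im]
  ring

theorem Real.sub_lt_mul_log_div {a b : ℝ} (ha : 0 < a) (hb : 0 < b) (hab : a ≠ b) :
    a - b < a * log (a / b) := by
  have hlog : log (b / a) < b / a - 1 :=
    log_lt_sub_one_of_pos (div_pos hb ha) (by rw [Ne, div_eq_one_iff_eq ha.ne']; exact hab.symm)
  calc a - b = -(a * (b / a - 1)) := by field_simp; ring
    _ < -(a * log (b / a)) := by gcongr
    _ = a * log (a / b) := by rw [← inv_div, log_inv]; ring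

theorem stmt_15 (z ζ : ℂ) (hz : ‖z‖ < 1) (hζ : ‖ζ‖ < 1) (hne : z ≠ ζ) :
    0 < ‖z - ζ‖^2 * Real.log (‖z - ζ‖^2 / ‖1 - z * starRingEnd ℂ ζ‖^2)
        + (1 - ‖z‖^2) * (1 - ‖ζ‖^2) := by
  have ha : 0 < ‖z - ζ‖ ^ 2 := pow_pos (norm_pos_iff.mpr (sub_ne_zero.mpr hne)) 2
  have hc : 0 < (1 - ‖z‖ ^ 2) * (1 - ‖ζ‖ ^ 2) :=
    mul_pos (by nlinarith [norm_nonneg z]) (by nlinarith [norm_nonneg ζ])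
  rw [Complex.sq_norm_one_sub_mul_conj]
  have := Real.sub_lt_mul_log_div (b := ‖z - ζ‖ ^ 2 + (1 - ‖z‖ ^ 2) * (1 - ‖ζ‖ ^ 2)) ha
    (by positivity) (by linarith)
  linarith
end
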